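/- arXiv:2101.09867 — 2 statements merged into one kernel-verified Lean document; each statement's English description precedes it below -/
import Mathlib

section
/- Let j, k ≥ 0 be integers with j ≥ 1, and let M_1, …, M_j ∈ C^∞([0,∞), ℝ). Set p(j,k) := max{k-j+1, 1}, q(j,k) := min{k, j}, and C(j,k,t) := ∑_{l=max{0, j-1-k}}^{j-1} t^l/l!. Then for every t > 0, |d^k/dt^k (M_1 * ⋯ * M_j)(t)| ≤ C(j,k,t) · (∏_{1 ≤ l ≤ q(j,k)} ‖M_l‖_{C^{p(j,k)}([0,t])}) · (∏_{q(j,k) < l ≤ j} ‖M_l‖_{C^{p(j,k)-1}([0,t])}). -/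
open Set MeasureTheory

/-- Convolution on `[0,∞)` (via signed interval integral): `(f*g)(t) = ∫_0^t f(t-s) g(s) ds`. -/
noncomputable def conv (f g : ℝ → ℝ) : ℝ → ℝ :=
  fun t => ∫ s in (0:ℝ)..t, f (t - s) * g s

/-- `j`-fold convolution power of `M`, with the conventions `M^{*0} = 0` and `M^{*1} = M`. -/
noncomputable def convPow (M : ℝ → ℝ) : ℕ → ℝ → ℝ
  | 0 => fun _ => 0
  | 1 => M
  | (j+2) => conv M (convPow M (j+1))

/-- The norm `‖f‖_{C^k([0,t])} = ∑_{l=0}^k max_{0 ≤ τ ≤ t} |f^{(l)}(τ)|`,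
derivatives taken within `[0,∞)`. -/
noncomputable def CkNorm (k : ℕ) (t : ℝ) (f : ℝ → ℝ) : ℝ :=
  ∑ l ∈ Finset.range (k+1), ⨆ τ : Set.Icc (0:ℝ) t, |iteratedDerivWithin l f (Set.Ici 0) τ|

/-- Iterated convolution `M_1 * ⋯ * M_j` of a list of functions (empty list ↦ 0). -/
noncomputable def convList : List (ℝ → ℝ) → ℝ → ℝ
  | [] => fun _ => 0
  | [f] => f
  | f :: g :: fs => conv f (convList (g :: fs))

/-!
Write `M₁ * M₂ * ⋯ * M_{j+1} = M₁ * G`. Moving one derivative onto `M₁` and the others onto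
`G` gives
`(M₁ * G)^{(k+1)}(t) = M₁(0) G^{(k)}(t) + ∑_{i<k} G^{(i)}(0) M₁^{(k-i)}(t) + (M₁' * G^{(k)})(t)`.
Induct on the number of factors, with the bound itself as the hypothesis for `G`. At `t = 0` that
bound kills every `G^{(i)}(0)` with `i < j - 1`, so the remaining boundary terms contribute only to
the coefficient of `t⁰`, while the Volterra term `M₁' * G^{(k)}` turns each `t^l/l!` into
`t^(l+1)/(l+1)!`. Comparing the coefficients of `t^l/l!` then fits all three terms into
`C(j+1,k+1,t)` times the product of norms, with exactly the orders `p` and `p - 1`.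
-/

open intervalIntegral

theorem integral_integral_triangle_swap {K : ℝ → ℝ → ℝ} (hK : Continuous (Function.uncurry K))
    {a b : ℝ} (hab : a ≤ b) :
    ∫ s in a..b, ∫ u in a..s, K s u = ∫ u in a..b, ∫ s in u..b, K s u := by
  set H : ℝ → ℝ → ℝ := fun s u => {p : ℝ × ℝ | p.2 ≤ p.1}.indicator (Function.uncurry K) (s, u)
  have inner_left :
      EqOn (fun s => ∫ u in a..s, K s u) (fun s => ∫ u in a..b, H s u) (uIcc a b) := by
    intro s hs
    rw [uIcc_of_le hab] at hs
    exact (integral_indicator hs).symm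
  have inner_right :
      EqOn (fun u => ∫ s in u..b, K s u) (fun u => ∫ s in a..b, H s u) (uIcc a b) := by
    intro u hu
    rw [uIcc_of_le hab] at hu
    have hH : (fun s => H s u) =ᵐ[volume] (Ioi u).indicator (fun s => K s u) :=
      indicator_ae_eq_of_ae_eq_set (Ioi_ae_eq_Ici (a := u)).symm
    dsimp only
    rw [integral_of_le hu.2, integral_of_le hab, integral_congr_ae (ae_restrict_of_ae hH),
      setIntegral_indicator measurableSet_Ioi, Ioc_inter_Ioi, max_eq_right hu.1]
  have hH : IntegrableOn (Function.uncurry H) (uIoc a b ×ˢ uIoc a b) :=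
    ((hK.continuousOn.integrableOn_compact (isCompact_uIcc.prod isCompact_uIcc)).mono_set
      (prod_mono uIoc_subset_uIcc uIoc_subset_uIcc)).indicator
      (measurableSet_le measurable_snd measurable_fst)
  rw [integral_congr inner_left, integral_congr inner_right,
    intervalIntegral_intervalIntegral_swap hH]

theorem conv_comm (f g : ℝ → ℝ) : conv f g = conv g f := by
  ext t
  simpa [conv, mul_comm] using integral_comp_sub_left (fun s => g (t - s) * f s) t (a := 0) (b := t)

theorem continuous_conv {f g : ℝ → ℝ} (hf : Continuous f) (hg : Continuous g) :
    Continuous (conv f g) :=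
  continuous_parametric_intervalIntegral_of_continuous (by fun_prop) continuous_id

theorem conv_primitive_eq_integral_conv {f h : ℝ → ℝ} (hf : Continuous f) (hh : Continuous h)
    {τ : ℝ} (hτ : 0 ≤ τ) :
    conv f (fun s => ∫ u in (0:ℝ)..s, h u) τ = ∫ σ in (0:ℝ)..τ, conv f h σ := by
  have inner : ∀ u, ∫ s in u..τ, f (τ - s) * h u = ∫ σ in u..τ, f (σ - u) * h u := fun u => by
    simp only [intervalIntegral.integral_mul_const, integral_comp_sub_left,
      integral_comp_sub_right, sub_self]
  calc conv f (fun s => ∫ u in (0:ℝ)..s, h u) τ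
      = ∫ s in (0:ℝ)..τ, ∫ u in (0:ℝ)..s, f (τ - s) * h u := by
        simp only [conv, intervalIntegral.integral_const_mul]
    _ = ∫ u in (0:ℝ)..τ, ∫ s in u..τ, f (τ - s) * h u :=
        integral_integral_triangle_swap (by fun_prop) hτ
    _ = ∫ u in (0:ℝ)..τ, ∫ σ in u..τ, f (σ - u) * h u := by simp only [inner]
    _ = ∫ σ in (0:ℝ)..τ, conv f h σ :=
        (integral_integral_triangle_swap (K := fun σ u => f (σ - u) * h u) (by fun_prop) hτ).symm

/-- Lets Fubini and the fundamental theorem of calculus be applied to convolutions of functions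
given only on `[0, ∞)`, through globally continuous integrands. -/
def extendLeft (f : ℝ → ℝ) : ℝ → ℝ := fun x => f (max x 0)

section Conv

variable {f g : ℝ → ℝ}

theorem continuous_extendLeft (hf : ContinuousOn f (Ici 0)) : Continuous (extendLeft f) :=
  hf.comp_continuous (continuous_id.max continuous_const) fun x => le_max_right x 0

theorem extendLeft_of_nonneg {x : ℝ} (hx : 0 ≤ x) : extendLeft f x = f x := by
  simp [extendLeft, hx]

theorem conv_extendLeft {t : ℝ} (ht : 0 ≤ t) :
    conv (extendLeft f) (extendLeft g) t = conv f g t := by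
  refine integral_congr fun s hs => ?_
  rw [uIcc_of_le ht] at hs
  simp only [extendLeft_of_nonneg hs.1, extendLeft_of_nonneg (sub_nonneg.2 hs.2)]

theorem continuousOn_conv (hf : ContinuousOn f (Ici 0)) (hg : ContinuousOn g (Ici 0)) :
    ContinuousOn (conv f g) (Ici 0) :=
  (continuous_conv (continuous_extendLeft hf) (continuous_extendLeft hg)).continuousOn.congr
    fun _ ht => (conv_extendLeft ht).symm

theorem eq_add_integral_extendLeft_derivWithin (hg : ContDiffOn ℝ 1 g (Ici 0)) {s : ℝ}
    (hs : 0 ≤ s) : g s = g 0 + ∫ u in (0:ℝ)..s, extendLeft (derivWithin g (Ici 0)) u := by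
  have hH : Continuous (extendLeft (derivWithin g (Ici 0))) :=
    continuous_extendLeft (hg.continuousOn_derivWithin (uniqueDiffOn_Ici 0) le_rfl)
  have hderiv : ∀ x ∈ Ioo 0 s,
      HasDerivWithinAt g (extendLeft (derivWithin g (Ici 0)) x) (Ioi x) x := fun x hx => by
    rw [extendLeft_of_nonneg hx.1.le]
    exact (hg.differentiableOn one_ne_zero x hx.1.le).hasDerivWithinAt.mono
      (Ioi_subset_Ici hx.1.le)
  rw [integral_eq_sub_of_hasDeriv_right_of_le hs (hg.continuousOn.mono Icc_subset_Ici_self)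
    hderiv (hH.intervalIntegrable 0 s)]
  ring

theorem conv_eq_add_integral_conv_derivWithin (hf : ContinuousOn f (Ici 0))
    (hg : ContDiffOn ℝ 1 g (Ici 0)) {τ : ℝ} (hτ : 0 ≤ τ) :
    conv f g τ = g 0 * (∫ x in (0:ℝ)..τ, extendLeft f x) +
      ∫ σ in (0:ℝ)..τ, conv (extendLeft f) (extendLeft (derivWithin g (Ici 0))) σ := by
  have hF : Continuous (extendLeft f) := continuous_extendLeft hf
  have hH : Continuous (extendLeft (derivWithin g (Ici 0))) :=
    continuous_extendLeft (hg.continuousOn_derivWithin (uniqueDiffOn_Ici 0) le_rfl)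
  have hprim := continuous_primitive (μ := volume) (fun a b => hH.intervalIntegrable a b) 0
  have hshift : g 0 * ∫ x in (0:ℝ)..τ, extendLeft f x
      = ∫ s in (0:ℝ)..τ, extendLeft f (τ - s) * g 0 := by
    simp [intervalIntegral.integral_mul_const, mul_comm]
  rw [← conv_primitive_eq_integral_conv hF hH hτ, ← conv_extendLeft hτ, hshift, conv, conv,
    ← intervalIntegral.integral_add (Continuous.intervalIntegrable (by fun_prop) _ _)
      (Continuous.intervalIntegrable (by fun_prop) _ _)]
  refine integral_congr fun s hs => ?_
  rw [uIcc_of_le hτ] at hs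
  simp only [extendLeft_of_nonneg hs.1, eq_add_integral_extendLeft_derivWithin hg hs.1]
  ring

theorem hasDerivWithinAt_conv (hf : ContinuousOn f (Ici 0)) (hg : ContDiffOn ℝ 1 g (Ici 0))
    {t : ℝ} (ht : 0 ≤ t) :
    HasDerivWithinAt (conv f g) (g 0 * f t + conv f (derivWithin g (Ici 0)) t) (Ici 0) t := by
  have hF : Continuous (extendLeft f) := continuous_extendLeft hf
  have hH : Continuous (extendLeft (derivWithin g (Ici 0))) :=
    continuous_extendLeft (hg.continuousOn_derivWithin (uniqueDiffOn_Ici 0) le_rfl)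
  have hd := ((hF.integral_hasStrictDerivAt 0 t).hasDerivAt.const_mul (g 0)).add
    ((continuous_conv hF hH).integral_hasStrictDerivAt 0 t).hasDerivAt
  simpa only [extendLeft_of_nonneg ht, conv_extendLeft ht] using
    hd.hasDerivWithinAt.congr_of_mem
      (fun τ (hτ : τ ∈ Ici 0) => conv_eq_add_integral_conv_derivWithin hf hg hτ) ht

theorem derivWithin_conv (hf : ContinuousOn f (Ici 0)) (hg : ContDiffOn ℝ 1 g (Ici 0)) :
    EqOn (derivWithin (conv f g) (Ici 0))
      (fun t => g 0 * f t + conv f (derivWithin g (Ici 0)) t) (Ici 0) :=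
  fun _ ht => (hasDerivWithinAt_conv hf hg ht).derivWithin (uniqueDiffOn_Ici 0 _ ht)

theorem contDiffOn_conv (hf : ContDiffOn ℝ (⊤ : ℕ∞) f (Ici 0))
    (hg : ContDiffOn ℝ (⊤ : ℕ∞) g (Ici 0)) : ContDiffOn ℝ (⊤ : ℕ∞) (conv f g) (Ici 0) := by
  refine contDiffOn_infty.2 fun n => ?_
  induction n generalizing g with
  | zero => exact contDiffOn_zero.2 (continuousOn_conv hf.continuousOn hg.continuousOn)
  | succ n ih =>
    have hg1 : ContDiffOn ℝ 1 g (Ici 0) := hg.of_le (by simp)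
    rw [Nat.cast_add_one, contDiffOn_succ_iff_derivWithin (uniqueDiffOn_Ici 0)]
    refine ⟨fun t ht => (hasDerivWithinAt_conv hf.continuousOn hg1 ht).differentiableWithinAt,
      by simp, ?_⟩
    exact ((contDiffOn_const.mul (hf.of_le (mod_cast le_top))).add
      (ih (hg.derivWithin (uniqueDiffOn_Ici 0) (by simp)))).congr
      (derivWithin_conv hf.continuousOn hg1)

end Conv

theorem ContDiffOn.iteratedDerivWithin {𝕜 F : Type*} [NontriviallyNormedField 𝕜]
    [NormedAddCommGroup F] [NormedSpace 𝕜 F] {g : 𝕜 → F} {s : Set 𝕜}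
    (hg : ContDiffOn 𝕜 (⊤ : ℕ∞) g s) (hs : UniqueDiffOn 𝕜 s) (k : ℕ) :
    ContDiffOn 𝕜 (⊤ : ℕ∞) (iteratedDerivWithin k g s) s := by
  induction k with
  | zero => simpa
  | succ k ih => rw [iteratedDerivWithin_succ]; exact ih.derivWithin hs (by simp)

section IteratedConv

variable {f g : ℝ → ℝ}

theorem iteratedDerivWithin_conv (hf : ContDiffOn ℝ (⊤ : ℕ∞) f (Ici 0))
    (hg : ContDiffOn ℝ (⊤ : ℕ∞) g (Ici 0)) (k : ℕ) {t : ℝ} (ht : t ∈ Ici (0:ℝ)) :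
    iteratedDerivWithin k (conv f g) (Ici 0) t =
      ∑ i ∈ Finset.range k, iteratedDerivWithin i g (Ici 0) 0 *
          iteratedDerivWithin (k - 1 - i) f (Ici 0) t +
        conv f (iteratedDerivWithin k g (Ici 0)) t := by
  induction k generalizing g with
  | zero => simp
  | succ k ih =>
    have hg' := hg.derivWithin (uniqueDiffOn_Ici 0) (m := (⊤ : ℕ∞)) (by simp)
    rw [iteratedDerivWithin_succ', iteratedDerivWithin_congr
        (derivWithin_conv hf.continuousOn (hg.of_le (by simp))) ht,
      iteratedDerivWithin_fun_add ht (uniqueDiffOn_Ici 0)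
        ((contDiffOn_const.mul hf).contDiffWithinAt ht |>.of_le (mod_cast le_top))
        ((contDiffOn_conv hf hg').contDiffWithinAt ht |>.of_le (mod_cast le_top)),
      iteratedDerivWithin_const_mul ht (uniqueDiffOn_Ici 0) _
        (hf.contDiffWithinAt ht |>.of_le (mod_cast le_top)),
      ih hg', Finset.sum_range_succ', iteratedDerivWithin_succ']
    simp only [iteratedDerivWithin_succ', iteratedDerivWithin_zero, Nat.add_sub_cancel,
      Nat.sub_zero, Nat.sub_sub, Nat.add_comm 1]
    ring

theorem iteratedDerivWithin_succ_conv (hf : ContDiffOn ℝ (⊤ : ℕ∞) f (Ici 0))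
    (hg : ContDiffOn ℝ (⊤ : ℕ∞) g (Ici 0)) (k : ℕ) {t : ℝ} (ht : t ∈ Ici (0:ℝ)) :
    iteratedDerivWithin (k + 1) (conv f g) (Ici 0) t =
      f 0 * iteratedDerivWithin k g (Ici 0) t +
        ∑ i ∈ Finset.range k, iteratedDerivWithin i g (Ici 0) 0 *
          iteratedDerivWithin (k - i) f (Ici 0) t +
        conv (derivWithin f (Ici 0)) (iteratedDerivWithin k g (Ici 0)) t := by
  have hf' := hf.derivWithin (uniqueDiffOn_Ici 0) (m := (⊤ : ℕ∞)) (by simp)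
  rw [conv_comm, iteratedDerivWithin_succ', iteratedDerivWithin_congr
      (derivWithin_conv hg.continuousOn (hf.of_le (by simp))) ht, conv_comm,
    iteratedDerivWithin_fun_add ht (uniqueDiffOn_Ici 0)
      ((contDiffOn_const.mul hg).contDiffWithinAt ht |>.of_le (mod_cast le_top))
      ((contDiffOn_conv hf' hg).contDiffWithinAt ht |>.of_le (mod_cast le_top)),
    iteratedDerivWithin_const_mul ht (uniqueDiffOn_Ici 0) _
      (hg.contDiffWithinAt ht |>.of_le (mod_cast le_top)),
    iteratedDerivWithin_conv hf' hg k ht, ← add_assoc]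
  refine congrArg₂ _ (congrArg₂ _ rfl (Finset.sum_congr rfl fun i hi => ?_)) rfl
  rw [← iteratedDerivWithin_succ', show k - 1 - i + 1 = k - i by grind]

end IteratedConv

theorem abs_le_iSup_Icc {φ : ℝ → ℝ} {a b x : ℝ} (hφ : ContinuousOn φ (Icc a b))
    (hx : x ∈ Icc a b) : |φ x| ≤ ⨆ y : Icc a b, |φ y| :=
  le_ciSup (isCompact_range (continuousOn_iff_continuous_domRestrict.1 hφ).abs).bddAbove ⟨x, hx⟩

section CkNorm

variable {f : ℝ → ℝ} {T : ℝ}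

theorem CkNorm_nonneg (n : ℕ) : 0 ≤ CkNorm n T f :=
  Finset.sum_nonneg fun _ _ => Real.iSup_nonneg fun _ => abs_nonneg _

theorem CkNorm_mono {n m : ℕ} (h : n ≤ m) : CkNorm n T f ≤ CkNorm m T f :=
  Finset.sum_le_sum_of_subset_of_nonneg (Finset.range_subset_range.2 (by omega))
    fun _ _ _ => Real.iSup_nonneg fun _ => abs_nonneg _

theorem abs_iteratedDerivWithin_le_CkNorm (hf : ContDiffOn ℝ (⊤ : ℕ∞) f (Ici 0)) {r n : ℕ}
    (hr : r ≤ n) {s : ℝ} (hs : s ∈ Icc 0 T) :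
    |iteratedDerivWithin r f (Ici 0) s| ≤ CkNorm n T f :=
  (abs_le_iSup_Icc ((hf.continuousOn_iteratedDerivWithin (mod_cast le_top)
    (uniqueDiffOn_Ici 0)).mono Icc_subset_Ici_self) hs).trans
    (Finset.single_le_sum (f := fun l => ⨆ τ : Icc (0:ℝ) T,
      |iteratedDerivWithin l f (Ici 0) τ|) (fun _ _ => Real.iSup_nonneg fun _ => abs_nonneg _)
      (Finset.mem_range.2 (by omega)))

end CkNorm

noncomputable def expSegment (a b : ℕ) (s : ℝ) : ℝ :=
  ∑ l ∈ Finset.Icc a b, s ^ l / (l.factorial : ℝ)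

section ExpSegment

variable {a b : ℕ} {s : ℝ}

theorem expSegment_nonneg (hs : 0 ≤ s) : 0 ≤ expSegment a b s :=
  Finset.sum_nonneg fun _ _ => by positivity

theorem expSegment_mono {a' b' : ℕ} (ha : a' ≤ a) (hb : b ≤ b') (hs : 0 ≤ s) :
    expSegment a b s ≤ expSegment a' b' s :=
  Finset.sum_le_sum_of_subset_of_nonneg (Finset.Icc_subset_Icc ha hb) fun _ _ _ => by positivity

theorem expSegment_eval_zero : expSegment a b 0 = if a = 0 then 1 else 0 := by
  simp [expSegment, zero_pow_eq, ite_div, Finset.sum_ite_eq']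

theorem expSegment_zero_left : expSegment 0 b s = 1 + expSegment 1 b s := by
  rw [expSegment, expSegment, ← Finset.add_sum_Ioc_eq_sum_Icc (Nat.zero_le b),
    ← Finset.Icc_add_one_left_eq_Ioc]
  simp

@[fun_prop]
theorem continuous_expSegment : Continuous (expSegment a b) := by
  unfold expSegment
  fun_prop

theorem integral_expSegment :
    ∫ σ in (0:ℝ)..s, expSegment a b σ = expSegment (a + 1) (b + 1) s := by
  simp only [expSegment]
  rw [← Finset.map_add_right_Icc, Finset.sum_map,
    intervalIntegral.integral_finsetSum fun l _ => Continuous.intervalIntegrable (by fun_prop) _ _]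
  refine Finset.sum_congr rfl fun l _ => ?_
  simp [intervalIntegral.integral_div, Nat.factorial_succ]
  field_simp

end ExpSegment

theorem abs_conv_le {f h B : ℝ → ℝ} {A t : ℝ} (ht : 0 ≤ t) (hf : ContinuousOn f (Icc 0 t))
    (hh : ContinuousOn h (Icc 0 t)) (hA : ∀ x ∈ Icc 0 t, |f x| ≤ A)
    (hB : IntervalIntegrable B volume 0 t) (hhB : ∀ s ∈ Icc 0 t, |h s| ≤ B s) :
    |conv f h t| ≤ A * ∫ s in (0:ℝ)..t, B s := by
  have hA0 : 0 ≤ A := (abs_nonneg _).trans (hA 0 ⟨le_rfl, ht⟩)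
  have hcont : ContinuousOn (fun s => |f (t - s) * h s|) (uIcc 0 t) := by
    rw [uIcc_of_le ht]
    refine ((hf.comp (continuousOn_const.sub continuousOn_id) fun s hs => ?_).mul hh).abs
    exact ⟨sub_nonneg.2 hs.2, by simp [hs.1]⟩
  calc |conv f h t| ≤ ∫ s in (0:ℝ)..t, |f (t - s) * h s| := abs_integral_le_integral_abs ht
    _ ≤ ∫ s in (0:ℝ)..t, A * B s := by
        refine integral_mono_on ht hcont.intervalIntegrable (hB.const_mul A) fun s hs => ?_
        rw [abs_mul]
        exact mul_le_mul (hA _ ⟨sub_nonneg.2 hs.2, by linarith [hs.1]⟩) (hhB s hs)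
          (abs_nonneg _) hA0
    _ = A * ∫ s in (0:ℝ)..t, B s := intervalIntegral.integral_const_mul A B

theorem abs_conv_le_expSegment {f G : ℝ → ℝ} {A X s : ℝ} {m n : ℕ} (hs : 0 ≤ s)
    (hf : ContinuousOn f (Icc 0 s)) (hG : ContinuousOn G (Icc 0 s))
    (hA : ∀ x ∈ Icc 0 s, |f x| ≤ A) (hGX : ∀ σ ∈ Icc 0 s, |G σ| ≤ expSegment m n σ * X) :
    |conv f G s| ≤ A * (expSegment (m + 1) (n + 1) s * X) := by
  have := abs_conv_le hs hf hG hA (B := fun σ => expSegment m n σ * X)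
    (Continuous.intervalIntegrable (by fun_prop) 0 s) hGX
  rwa [intervalIntegral.integral_mul_const, integral_expSegment] at this

theorem abs_sum_boundary_le {c φ a X : ℕ → ℝ} {j k : ℕ} (ha : ∀ r, 0 ≤ a r)
    (hφ : ∀ r, |φ r| ≤ a r) (hX : Monotone X)
    (hc : ∀ i, |c i| ≤ expSegment (j - 1 - i) (j - 1) 0 * X i) :
    |∑ i ∈ Finset.range k, c i * φ (k - i)| ≤ (∑ i ∈ Finset.Ico (j - 1) k, a (k - i)) * X k := by
  calc _ ≤ ∑ i ∈ Finset.range k, if j - 1 ≤ i then a (k - i) * X k else 0 := by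
        refine (Finset.abs_sum_le_sum_abs _ _).trans (Finset.sum_le_sum fun i hi => ?_)
        have hci := hc i
        rw [expSegment_eval_zero] at hci
        rw [abs_mul]
        by_cases hji : j - 1 ≤ i
        · rw [if_pos (by omega), one_mul] at hci
          rw [if_pos hji, mul_comm]
          exact mul_le_mul (hφ _) (hci.trans (hX (Finset.mem_range.1 hi).le)) (abs_nonneg _)
            (ha _)
        · rw [if_neg (by omega), zero_mul] at hci
          rw [if_neg hji]
          nlinarith [abs_nonneg (φ (k - i)), abs_nonneg (c i)]
    _ = _ := by
        rw [← Finset.sum_filter, Finset.sum_mul]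
        congr 1
        ext i
        simp only [Finset.mem_filter, Finset.mem_range, Finset.mem_Ico]
        omega

/-- The coefficient comparison of the induction step, where `a r` bounds `|M₁^{(r)}|` on `[0, T]`:
the boundary terms `∑ a (k - i)` only occupy the power `s⁰`, which the Volterra term
`a 1 * expSegment (j - 1 - k + 1) j s` never reaches. -/
theorem head_weights_le {a : ℕ → ℝ} (ha : ∀ r, 0 ≤ a r) {j k : ℕ} (hj : 1 ≤ j) {s : ℝ}
    (hs : 0 ≤ s) :
    a 0 * expSegment (j - 1 - k) (j - 1) s + a 1 * expSegment (j - 1 - k + 1) j s +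
        ∑ i ∈ Finset.Ico (j - 1) k, a (k - i) ≤
      (∑ r ∈ Finset.range (max (k + 1 - j) 1 + 1), a r) * expSegment (j - (k + 1)) j s := by
  rcases lt_or_ge k j with hk | hk
  · rw [Finset.Ico_eq_empty (by omega), Finset.sum_empty, show max (k + 1 - j) 1 = 1 by omega,
      Finset.sum_range_succ, Finset.sum_range_one]
    have h0 := expSegment_mono (a := j - 1 - k) (a' := j - (k + 1)) (by omega)
      (by omega : j - 1 ≤ j) hs
    have h1 := expSegment_mono (a := j - 1 - k + 1) (a' := j - (k + 1)) (b := j) (by omega)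
      le_rfl hs
    nlinarith [ha 0, ha 1]
  · set R := ∑ r ∈ Finset.Ico 1 (k + 2 - j), a r
    have hsum : ∑ i ∈ Finset.Ico (j - 1) k, a (k - i) = R := by
      rw [Finset.sum_Ico_reflect _ _ (by omega), show k + 1 - k = 1 by omega,
        show k + 1 - (j - 1) = k + 2 - j by omega]
    have hN : ∑ r ∈ Finset.range (max (k + 1 - j) 1 + 1), a r = a 0 + R := by
      rw [Finset.range_eq_Ico, Finset.sum_eq_sum_Ico_succ_bot (by omega),
        show max (k + 1 - j) 1 + 1 = k + 2 - j by omega]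
    have hR : a 1 ≤ R :=
      Finset.single_le_sum (fun r _ => ha r) (Finset.mem_Ico.2 ⟨le_rfl, by omega⟩)
    have h0 : expSegment 0 (j - 1) s ≤ 1 + expSegment 1 j s := by
      rw [← expSegment_zero_left]
      exact expSegment_mono le_rfl (by omega) hs
    have h1 : 0 ≤ expSegment 1 j s := expSegment_nonneg hs
    rw [hsum, hN, show j - 1 - k = 0 by omega, show j - (k + 1) = 0 by omega, zero_add,
      expSegment_zero_left (b := j)]
    nlinarith [mul_le_mul_of_nonneg_left h0 (ha 0), mul_le_mul_of_nonneg_right hR h1]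

theorem abs_iteratedDerivWithin_succ_conv_le {f G : ℝ → ℝ} {T : ℝ}
    (hf : ContDiffOn ℝ (⊤ : ℕ∞) f (Ici 0)) (hG : ContDiffOn ℝ (⊤ : ℕ∞) G (Ici 0)) {j : ℕ}
    (hj : 1 ≤ j) {X : ℕ → ℝ} (hX : Monotone X) (hX0 : ∀ i, 0 ≤ X i)
    (hGX : ∀ i, ∀ s ∈ Icc 0 T,
      |iteratedDerivWithin i G (Ici 0) s| ≤ expSegment (j - 1 - i) (j - 1) s * X i)
    (k : ℕ) {s : ℝ} (hs : s ∈ Icc 0 T) :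
    |iteratedDerivWithin (k + 1) (conv f G) (Ici 0) s| ≤
      expSegment (j - (k + 1)) j s * (CkNorm (max (k + 1 - j) 1) T f * X k) := by
  set a : ℕ → ℝ := fun r => ⨆ τ : Icc (0:ℝ) T, |iteratedDerivWithin r f (Ici 0) τ|
  have ha0 : ∀ r, 0 ≤ a r := fun r => Real.iSup_nonneg fun _ => abs_nonneg _
  have hfa : ∀ r, ∀ x ∈ Icc 0 T, |iteratedDerivWithin r f (Ici 0) x| ≤ a r := fun r x hx =>
    abs_le_iSup_Icc ((hf.continuousOn_iteratedDerivWithin (mod_cast le_top)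
      (uniqueDiffOn_Ici 0)).mono Icc_subset_Ici_self) hx
  have hsT : Icc 0 s ⊆ Icc 0 T := Icc_subset_Icc_right hs.2
  have head : |f 0 * iteratedDerivWithin k G (Ici 0) s| ≤
      a 0 * (expSegment (j - 1 - k) (j - 1) s * X k) := by
    rw [abs_mul]
    exact mul_le_mul (by simpa using hfa 0 0 (hsT ⟨le_rfl, hs.1⟩)) (hGX k s hs) (abs_nonneg _)
      (ha0 0)
  have boundary := abs_sum_boundary_le (k := k) ha0 (fun r => hfa r s hs) hX
    fun i => hGX i 0 (hsT ⟨le_rfl, hs.1⟩)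
  have volterra := abs_conv_le_expSegment hs.1
    (((hf.derivWithin (uniqueDiffOn_Ici 0) (m := (⊤ : ℕ∞)) (by simp)).continuousOn).mono
      (Icc_subset_Ici_self.trans' hsT))
    (((hG.iteratedDerivWithin (uniqueDiffOn_Ici 0) k).continuousOn).mono
      (Icc_subset_Ici_self.trans' hsT))
    (fun x hx => by simpa [iteratedDerivWithin_one] using hfa 1 x (hsT hx))
    fun σ hσ => hGX k σ (hsT hσ)
  rw [Nat.sub_add_cancel hj] at volterra
  rw [iteratedDerivWithin_succ_conv hf hG k hs.1]
  calc _ ≤ _ := abs_add_three _ _ _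
    _ ≤ (a 0 * expSegment (j - 1 - k) (j - 1) s + a 1 * expSegment (j - 1 - k + 1) j s +
        ∑ i ∈ Finset.Ico (j - 1) k, a (k - i)) * X k := by linarith
    _ ≤ (∑ r ∈ Finset.range (max (k + 1 - j) 1 + 1), a r) * expSegment (j - (k + 1)) j s *
        X k := mul_le_mul_of_nonneg_right (head_weights_le ha0 hj hs.1) (hX0 k)
    _ = _ := by rw [CkNorm]; ring

def normOrder (j k i : ℕ) : ℕ :=
  if i + 1 ≤ min k j then max (k + 1 - j) 1 else max (k + 1 - j) 1 - 1

section NormOrder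

variable {j k i : ℕ}

theorem normOrder_mono {k' : ℕ} (h : k ≤ k') : normOrder j k i ≤ normOrder j k' i := by
  unfold normOrder
  split_ifs <;> omega

theorem normOrder_zero : normOrder j 0 i = 0 := by
  unfold normOrder
  split_ifs <;> omega

theorem normOrder_one_zero : normOrder 1 k 0 = k := by
  unfold normOrder
  split_ifs <;> omega

theorem normOrder_succ_succ_zero : normOrder (j + 1) (k + 1) 0 = max (k + 1 - j) 1 := by
  unfold normOrder
  split_ifs <;> omega

theorem normOrder_succ_succ_succ : normOrder (j + 1) (k + 1) (i + 1) = normOrder j k i := by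
  unfold normOrder
  split_ifs <;> omega

end NormOrder

theorem contDiffOn_convList :
    ∀ {L : List (ℝ → ℝ)}, (∀ f ∈ L, ContDiffOn ℝ (⊤ : ℕ∞) f (Ici 0)) →
      ContDiffOn ℝ (⊤ : ℕ∞) (convList L) (Ici 0)
  | [], _ => contDiffOn_const
  | [f], h => h f (List.mem_singleton_self f)
  | f :: _ :: _, h => contDiffOn_conv (h f List.mem_cons_self)
      (contDiffOn_convList fun x hx => h x (List.mem_cons_of_mem f hx))

theorem convList_ofFn_succ {j : ℕ} (hj : 1 ≤ j) (Ms : Fin (j + 1) → ℝ → ℝ) :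
    convList (List.ofFn Ms) = conv (Ms 0) (convList (List.ofFn fun i : Fin j => Ms i.succ)) := by
  obtain ⟨n, rfl⟩ := Nat.exists_eq_add_of_le' hj
  rw [List.ofFn_succ, List.ofFn_succ]
  rfl

theorem abs_iteratedDerivWithin_convList_le {T : ℝ} {j : ℕ} (hj : 1 ≤ j)
    (Ms : Fin j → ℝ → ℝ) (hMs : ∀ i, ContDiffOn ℝ (⊤ : ℕ∞) (Ms i) (Ici 0)) (k : ℕ) {s : ℝ}
    (hs : s ∈ Icc 0 T) :
    |iteratedDerivWithin k (convList (List.ofFn Ms)) (Ici 0) s| ≤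
      expSegment (j - 1 - k) (j - 1) s * ∏ i : Fin j, CkNorm (normOrder j k i) T (Ms i) := by
  induction j, hj using Nat.le_induction generalizing k s with
  | base =>
    simpa [List.ofFn_succ, convList, expSegment, normOrder_one_zero] using
      abs_iteratedDerivWithin_le_CkNorm (hMs 0) le_rfl hs
  | succ j hj ih =>
    have hG := contDiffOn_convList (List.forall_mem_ofFn_iff.2 fun i => hMs i.succ)
    have hGX := fun k s hs => ih (fun i => Ms i.succ) (fun i => hMs i.succ) k (s := s) hs
    rw [convList_ofFn_succ hj, Fin.prod_univ_succ]
    cases k with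
    | zero =>
      have hsT : Icc 0 s ⊆ Icc 0 T := Icc_subset_Icc_right hs.2
      have hM0 : ∀ x ∈ Icc 0 s, |Ms 0 x| ≤ CkNorm 0 T (Ms 0) := fun x hx => by
        simpa using abs_iteratedDerivWithin_le_CkNorm (r := 0) (hMs 0) le_rfl (hsT hx)
      have := abs_conv_le_expSegment hs.1
        ((hMs 0).continuousOn.mono (Icc_subset_Ici_self.trans' hsT))
        (hG.continuousOn.mono (Icc_subset_Ici_self.trans' hsT)) hM0
        fun σ hσ => by simpa [normOrder_zero] using hGX 0 σ (hsT hσ)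
      simpa [normOrder_zero, Nat.sub_add_cancel hj, mul_left_comm] using this
    | succ k =>
      have hX : Monotone fun k => ∏ i : Fin j, CkNorm (normOrder j k i) T (Ms i.succ) :=
        fun k k' h => Finset.prod_le_prod (fun _ _ => CkNorm_nonneg _)
          fun _ _ => CkNorm_mono (normOrder_mono h)
      simpa [normOrder_succ_succ_zero, normOrder_succ_succ_succ] using
        abs_iteratedDerivWithin_succ_conv_le (hMs 0) hG hj hX
          (fun _ => Finset.prod_nonneg fun _ _ => CkNorm_nonneg _) hGX k hs

/-- For `M_1, …, M_j ∈ C^∞([0,∞))` (`j ≥ 1`), `k ≥ 0`, with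
`p = max{k-j+1,1}`, `q = min{k,j}`, `C(j,k,t) = ∑_{l=max{0,j-1-k}}^{j-1} t^l/l!`: for `t > 0`,
`|d^k/dt^k (M_1*⋯*M_j)(t)| ≤ C(j,k,t) · ∏_{l≤q} ‖M_l‖_{C^p([0,t])} · ∏_{l>q} ‖M_l‖_{C^{p-1}([0,t])}`.
(The index `i : Fin j` corresponds to `l = i + 1 ∈ {1, …, j}`.) -/
theorem convList_deriv_bound_refined
    (j k : ℕ) (hj : 1 ≤ j) (Ms : Fin j → ℝ → ℝ)
    (hMs : ∀ i, ContDiffOn ℝ (⊤ : ℕ∞) (Ms i) (Set.Ici 0)) :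
    ∀ t : ℝ, 0 < t →
      |iteratedDerivWithin k (convList (List.ofFn Ms)) (Set.Ici 0) t| ≤
        (∑ l ∈ Finset.Icc (j - 1 - k) (j - 1), t ^ l / (l.factorial : ℝ)) *
          ∏ i : Fin j,
            CkNorm (if (i : ℕ) + 1 ≤ min k j then max (k + 1 - j) 1 else max (k + 1 - j) 1 - 1)
              t (Ms i) :=
  fun _ ht => abs_iteratedDerivWithin_convList_le hj Ms hMs k ⟨ht.le, le_rfl⟩
end

section
/- Let M : [0,∞) → ℝ be continuous, let t₀ ≥ 0 and T > 0. If ∑_{j=1}^∞ ((λ − t₀)^j / j!) M^{*j}(λ) = 0 for every λ ∈ [0,T], then M(λ) = 0 for every λ ∈ [0,T]. -/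
open Set MeasureTheory

/-!
Splitting off the `j = 1` term, the hypothesis at `λ` says that `(λ - t₀) M(λ)` is minus the
tail `∑_{j ≥ 2}` of the series. Since `|M^{*(j+2)}(x)| ≤ C^{j+1} x^j / j! ∫_0^x |M|`, that tail is
at most `|λ - t₀| K ∫_0^λ |M|` for a constant `K`. Dividing by `λ - t₀` (and passing to the limit
at `λ = t₀`) gives `|M(λ)| ≤ K ∫_0^λ |M|` on `[0, T]`, and Grönwall's inequality forces `M = 0`.
-/

theorem ContinuousOn.continuousOn_primitive_Icc {E : Type*} [NormedAddCommGroup E]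
    [NormedSpace ℝ E] {f : ℝ → E} {a b : ℝ} (hf : ContinuousOn f (Icc a b)) :
    ContinuousOn (fun x => ∫ u in a..x, f u) (Icc a b) := by
  rcases le_or_gt a b with hab | hba
  · rw [← uIcc_of_le hab] at hf ⊢
    exact intervalIntegral.continuousOn_primitive_interval (hf.integrableOn_compact isCompact_uIcc)
  · simp [Icc_eq_empty_of_lt hba]

theorem eq_zero_of_norm_le_mul_integral_norm {E : Type*} [NormedAddCommGroup E]
    {f : ℝ → E} {K a b : ℝ} (hf : ContinuousOn f (Icc a b))
    (hbound : ∀ x ∈ Icc a b, ‖f x‖ ≤ K * ∫ u in a..x, ‖f u‖) :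
    ∀ x ∈ Icc a b, f x = 0 := by
  have hnorm : ContinuousOn (fun u => ‖f u‖) (Icc a b) := hf.norm
  have hderiv : ∀ y ∈ Ico a b,
      HasDerivWithinAt (fun y => ∫ u in a..y, ‖f u‖) ‖f y‖ (Ici y) y := by
    intro y hy
    refine intervalIntegral.integral_hasDerivWithinAt_right (t := Ioi y)
      ((hnorm.mono (Icc_subset_Icc_right hy.2.le)).intervalIntegrable_of_Icc hy.1)
      ⟨Ioo y b, Ioo_mem_nhdsGT hy.2, (hnorm.mono (Ioo_subset_Icc_self.trans
        (Icc_subset_Icc_left hy.1))).aestronglyMeasurable measurableSet_Ioo⟩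
      ((hnorm y (Ico_subset_Icc_self hy)).mono_of_mem_nhdsWithin (Icc_mem_nhdsGT_of_mem hy))
  have hprimitive_zero := eq_zero_of_abs_deriv_le_mul_abs_self_of_eq_zero_right
    hnorm.continuousOn_primitive_Icc hderiv intervalIntegral.integral_same fun y hy => by
      rw [norm_norm, Real.norm_of_nonneg
        (intervalIntegral.integral_nonneg hy.1 fun _ _ => norm_nonneg _)]
      exact hbound y (Ico_subset_Icc_self hy)
  intro x hx
  exact norm_le_zero_iff.mp ((hbound x hx).trans_eq (by rw [hprimitive_zero x hx, mul_zero]))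

theorem Icc_subset_closure_Icc_diff_singleton {a b : ℝ} (hab : a < b) (p : ℝ) :
    Icc a b ⊆ closure (Icc a b \ {p}) :=
  calc Icc a b = closure (Ioo a b) := (closure_Ioo hab.ne).symm
    _ ⊆ closure (closure (Ioo a b ∩ {p}ᶜ)) :=
      closure_mono ((dense_compl_singleton p).open_subset_closure_inter isOpen_Ioo)
    _ ⊆ closure (Icc a b \ {p}) := by
      rw [closure_closure]
      exact closure_mono (inter_subset_inter_left _ Ioo_subset_Icc_self)

theorem ContinuousOn.le_on_Icc_of_le_off_point {α : Type*} [LinearOrder α] [TopologicalSpace α]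
    [OrderClosedTopology α] {f g : ℝ → α} {a b p : ℝ} (hab : a < b)
    (hf : ContinuousOn f (Icc a b)) (hg : ContinuousOn g (Icc a b))
    (hle : ∀ x ∈ Icc a b, x ≠ p → f x ≤ g x) : ∀ x ∈ Icc a b, f x ≤ g x := fun x hx =>
  ((hf x hx).mono sdiff_subset).closure_le (Icc_subset_closure_Icc_diff_singleton hab p hx)
    ((hg x hx).mono sdiff_subset) fun y hy => hle y hy.1 hy.2

theorem abs_convPow_add_two_le {M : ℝ → ℝ} {b C : ℝ} (hM : ContinuousOn M (Icc 0 b))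
    (hC : ∀ s ∈ Icc 0 b, |M s| ≤ C) (n : ℕ) :
    ∀ x ∈ Icc 0 b,
      |convPow M (n + 2) x| ≤ C ^ (n + 1) * x ^ n / n.factorial * ∫ u in 0..x, |M u| := by
  have hint : ∀ x ∈ Icc 0 b, IntervalIntegrable (fun u => |M u|) volume 0 x := fun x hx =>
    (hM.abs.mono (Icc_subset_Icc_right hx.2)).intervalIntegrable_of_Icc hx.1
  have hC_sub : ∀ x ∈ Icc 0 b, ∀ s ∈ Ioc 0 x, |M (x - s)| ≤ C := fun x hx s hs =>
    hC _ ⟨by linarith [hs.2], by linarith [hs.1, hx.2]⟩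
  induction n with
  | zero =>
    intro x hx
    calc |convPow M 2 x| = ‖∫ s in 0..x, M (x - s) * M s‖ := rfl
      _ ≤ ∫ s in 0..x, C * |M s| := by
        refine intervalIntegral.norm_integral_le_of_norm_le hx.1
          (Filter.Eventually.of_forall fun s hs => ?_) ((hint x hx).const_mul C)
        rw [Real.norm_eq_abs, abs_mul]
        exact mul_le_mul_of_nonneg_right (hC_sub x hx s hs) (abs_nonneg _)
      _ = C ^ (0 + 1) * x ^ 0 / (0 : ℕ).factorial * ∫ u in 0..x, |M u| := by
        simp [intervalIntegral.integral_const_mul]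
  | succ n ih =>
    intro x hx
    set F := fun y => ∫ u in 0..y, |M u|
    have hF_mono : ∀ s ∈ Ioc 0 x, F s ≤ F x := fun s hs =>
      intervalIntegral.integral_mono_interval le_rfl hs.1.le hs.2
        (Filter.Eventually.of_forall fun _ => abs_nonneg _) (hint x hx)
    calc |convPow M (n + 3) x| = ‖∫ s in 0..x, M (x - s) * convPow M (n + 2) s‖ := rfl
      _ ≤ ∫ s in 0..x, C ^ (n + 2) / n.factorial * F x * s ^ n := by
        refine intervalIntegral.norm_integral_le_of_norm_le hx.1
          (Filter.Eventually.of_forall fun s hs => ?_)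
          (Continuous.intervalIntegrable (by fun_prop) _ _)
        have hs' : s ∈ Icc 0 b := ⟨hs.1.le, hs.2.trans hx.2⟩
        have hC0 : 0 ≤ C := (abs_nonneg _).trans (hC s hs')
        have hcoef : 0 ≤ C ^ (n + 1) * s ^ n / n.factorial :=
          div_nonneg (mul_nonneg (pow_nonneg hC0 _) (pow_nonneg hs'.1 _)) n.factorial.cast_nonneg
        rw [Real.norm_eq_abs, abs_mul]
        calc |M (x - s)| * |convPow M (n + 2) s|
            ≤ C * (C ^ (n + 1) * s ^ n / n.factorial * F s) :=
              mul_le_mul (hC_sub x hx s hs) (ih s hs') (abs_nonneg _) hC0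
          _ ≤ C * (C ^ (n + 1) * s ^ n / n.factorial * F x) := by
              gcongr
              exact hF_mono s hs
          _ = C ^ (n + 2) / n.factorial * F x * s ^ n := by ring
      _ = C ^ (n + 2) * x ^ (n + 1) / (n + 1).factorial * F x := by
        rw [intervalIntegral.integral_const_mul, integral_pow, Nat.factorial_succ]
        push_cast
        field_simp
        ring

theorem abs_pow_div_factorial_mul_convPow_le {M : ℝ → ℝ} {T C A x y : ℝ}
    (hM : ContinuousOn M (Icc 0 T)) (hC : ∀ s ∈ Icc 0 T, |M s| ≤ C) (hx : x ∈ Icc 0 T)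
    (hy : |y| ≤ A) (j : ℕ) :
    |y ^ (j + 2) / (j + 2).factorial * convPow M (j + 2) x| ≤
      |y| * (C * A) * (∫ u in 0..x, |M u|) * ((A * C * T) ^ j / j.factorial) := by
  have hC0 : 0 ≤ C := (abs_nonneg _).trans (hC 0 ⟨le_rfl, hx.1.trans hx.2⟩)
  have hA0 : 0 ≤ A := (abs_nonneg y).trans hy
  have hF0 : 0 ≤ ∫ u in 0..x, |M u| :=
    intervalIntegral.integral_nonneg hx.1 fun _ _ => abs_nonneg _
  have hfact : (1 : ℝ) ≤ (j + 2).factorial := by exact_mod_cast (j + 2).factorial_pos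
  have hy_pow : |y| ^ (j + 2) ≤ |y| * A ^ (j + 1) := by
    rw [pow_succ']; gcongr
  have hconv : |convPow M (j + 2) x| ≤ C ^ (j + 1) * T ^ j / j.factorial * ∫ u in 0..x, |M u| :=
    (abs_convPow_add_two_le hM hC j x hx).trans (by gcongr; exacts [hx.1, hx.2])
  rw [abs_mul, abs_div, abs_pow, Nat.abs_cast]
  calc |y| ^ (j + 2) / (j + 2).factorial * |convPow M (j + 2) x|
      ≤ (|y| * A ^ (j + 1)) / 1 *
          (C ^ (j + 1) * T ^ j / j.factorial * ∫ u in 0..x, |M u|) := by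
        gcongr
    _ = |y| * (C * A) * (∫ u in 0..x, |M u|) * ((A * C * T) ^ j / j.factorial) := by ring

theorem abs_mul_le_of_kernelSeries_eq_zero {M : ℝ → ℝ} {T C A x y : ℝ}
    (hM : ContinuousOn M (Icc 0 T)) (hC : ∀ s ∈ Icc 0 T, |M s| ≤ C) (hx : x ∈ Icc 0 T)
    (hy : |y| ≤ A) (h : ∑' j : ℕ, y ^ j / j.factorial * convPow M j x = 0) :
    |y * M x| ≤ |y| * (C * A * Real.exp (A * C * T)) * ∫ u in 0..x, |M u| := by
  set f : ℕ → ℝ := fun j => y ^ j / j.factorial * convPow M j x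
  have hexp : HasSum (fun j : ℕ => (A * C * T) ^ j / j.factorial) (Real.exp (A * C * T)) := by
    rw [Real.exp_eq_exp_ℝ]
    exact NormedSpace.expSeries_div_hasSum_exp _
  have htail : HasSum
      (fun j => |y| * (C * A) * (∫ u in 0..x, |M u|) * ((A * C * T) ^ j / j.factorial))
      (|y| * (C * A) * (∫ u in 0..x, |M u|) * Real.exp (A * C * T)) :=
    hexp.mul_left _
  have hbound (j : ℕ) := abs_pow_div_factorial_mul_convPow_le hM hC hx hy j
  have hf : Summable f := (summable_nat_add_iff 2).mp (htail.summable.of_norm_bounded hbound)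
  have hsplit : y * M x = -∑' j, f (j + 2) := by
    have hf0 : f 0 = 0 := by simp [f, convPow]
    have hf1 : f 1 = y * M x := by simp [f, convPow]
    have := hf.sum_add_tsum_nat_add 2
    rw [h, Finset.sum_range_succ, Finset.sum_range_one, hf0, hf1] at this
    linarith
  rw [hsplit, abs_neg, ← Real.norm_eq_abs]
  calc ‖∑' j, f (j + 2)‖ ≤ |y| * (C * A) * (∫ u in 0..x, |M u|) * Real.exp (A * C * T) :=
        tsum_of_norm_bounded htail hbound
    _ = |y| * (C * A * Real.exp (A * C * T)) * ∫ u in 0..x, |M u| := by ring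

theorem kernel_series_vanishing_implies_M_zero_general
    (M : ℝ → ℝ) (hM : ContinuousOn M (Set.Ici 0)) (t₀ T : ℝ) (hT : 0 < T)
    (h : ∀ lam ∈ Set.Icc (0:ℝ) T,
      ∑' j : ℕ, ((lam - t₀) ^ j / (j.factorial : ℝ)) * convPow M j lam = 0) :
    ∀ lam ∈ Set.Icc (0:ℝ) T, M lam = 0 := by
  have hM' : ContinuousOn M (Icc 0 T) := hM.mono Icc_subset_Ici_self
  obtain ⟨C, hC⟩ := isCompact_Icc.exists_bound_of_continuousOn hM'
  set A := T + |t₀|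
  set K := C * A * Real.exp (A * C * T)
  have hbound_off : ∀ x ∈ Icc 0 T, x ≠ t₀ → |M x| ≤ K * ∫ u in 0..x, |M u| := by
    intro x hx hne
    have hy : |x - t₀| ≤ A := (abs_sub _ _).trans (by rw [abs_of_nonneg hx.1]; linarith [hx.2])
    have hmul := abs_mul_le_of_kernelSeries_eq_zero hM' hC hx hy (h x hx)
    rw [abs_mul, mul_assoc] at hmul
    exact le_of_mul_le_mul_left hmul (abs_pos.mpr (sub_ne_zero.mpr hne))
  have hbound : ∀ x ∈ Icc 0 T, |M x| ≤ K * ∫ u in 0..x, |M u| :=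
    ContinuousOn.le_on_Icc_of_le_off_point hT hM'.abs
      (hM'.abs.continuousOn_primitive_Icc.const_smul K) hbound_off
  exact eq_zero_of_norm_le_mul_integral_norm hM' hbound

/-- Let `M : [0,∞) → ℝ` be continuous, `t₀ ≥ 0`, `T > 0`.  If
`∑_{j≥1} ((λ − t₀)^j/j!) M^{*j}(λ) = 0` for every `λ ∈ [0,T]`, then `M ≡ 0` on `[0,T]`.
(The `j = 0` term of the sum vanishes by the convention `M^{*0} = 0`.) -/
theorem kernel_series_vanishing_implies_M_zero
    (M : ℝ → ℝ) (hM : ContinuousOn M (Set.Ici 0)) (t₀ T : ℝ) (ht₀ : 0 ≤ t₀) (hT : 0 < T)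
    (h : ∀ lam ∈ Set.Icc (0:ℝ) T,
      ∑' j : ℕ, ((lam - t₀) ^ j / (j.factorial : ℝ)) * convPow M j lam = 0) :
    ∀ lam ∈ Set.Icc (0:ℝ) T, M lam = 0 :=
  kernel_series_vanishing_implies_M_zero_general M hM t₀ T hT h
end
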